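/- arXiv:1902.08639 — 3 statements merged into one kernel-verified Lean document; each statement's English description precedes it below -/
import Mathlib

section
/- Fix η > 0 and vectors v_i, v_j ∈ ℝ^B with v_i ≠ v_j and η ≤ ‖v_i − v_j‖₂/2. Then the unique minimizer (μ_i, μ_j) of P(μ_i, μ_j) = η‖μ_i − μ_j‖₂ + (1/2)‖v_i − μ_i‖₂² + (1/2)‖v_j − μ_j‖₂² over ℝ^B × ℝ^B is given by μ_i = (1−α)v_i + α v_j and μ_j = α v_i + (1−α)v_j with α = η/‖v_i − v_j‖₂. -/
/-! With the unit vector `u = (vᵢ - vⱼ) / ‖vᵢ - vⱼ‖` we have `vᵢ - mᵢ = η u = -(vⱼ - mⱼ)` and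
`mᵢ - mⱼ = (‖vᵢ - vⱼ‖ - 2η) u`, a nonnegative multiple of `u` since `η ≤ ‖vᵢ - vⱼ‖ / 2`; so `u` is a
subgradient of the norm at `mᵢ - mⱼ` and `m` satisfies the optimality condition of `P`. As `P` is
`1`-strongly convex, `P n ≥ P m + ½‖nᵢ - mᵢ‖² + ½‖nⱼ - mⱼ‖²`, which gives strict minimality. -/

noncomputable def proxObj {B : ℕ} (η : ℝ) (vi vj mi mj : EuclideanSpace ℝ (Fin B)) : ℝ :=
  η * ‖mi - mj‖ + (1 / 2) * ‖vi - mi‖ ^ 2 + (1 / 2) * ‖vj - mj‖ ^ 2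

theorem half_sq_norm_sub_add_pos {E : Type*} [NormedAddCommGroup E] {ni nj mi mj : E}
    (hn : (ni, nj) ≠ (mi, mj)) :
    0 < (1 / 2) * ‖ni - mi‖ ^ 2 + (1 / 2) * ‖nj - mj‖ ^ 2 := by
  rcases eq_or_ne ni mi with rfl | hni
  · have hnj : 0 < ‖nj - mj‖ := norm_pos_iff.mpr (sub_ne_zero.mpr fun h => hn (by rw [h]))
    simp only [sub_self, norm_zero]
    positivity
  · have := norm_pos_iff.mpr (sub_ne_zero.mpr hni)
    positivity

open RealInnerProductSpace

theorem fused_objective_add_half_sq_le {E : Type*} [NormedAddCommGroup E]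
    [InnerProductSpace ℝ E] {η : ℝ} (hη : 0 ≤ η) {u : E} (hu : ‖u‖ ≤ 1)
    {vi vj mi mj : E} (hi : vi - mi = η • u) (hj : vj - mj = -(η • u))
    (hm : ⟪u, mi - mj⟫ = ‖mi - mj‖) (ni nj : E) :
    η * ‖mi - mj‖ + (1 / 2) * ‖vi - mi‖ ^ 2 + (1 / 2) * ‖vj - mj‖ ^ 2
        + ((1 / 2) * ‖ni - mi‖ ^ 2 + (1 / 2) * ‖nj - mj‖ ^ 2)
      ≤ η * ‖ni - nj‖ + (1 / 2) * ‖vi - ni‖ ^ 2 + (1 / 2) * ‖vj - nj‖ ^ 2 := by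
  have hsub : ⟪u, ni - nj⟫ ≤ ‖ni - nj‖ :=
    (real_inner_le_norm u _).trans (mul_le_of_le_one_left (norm_nonneg _) hu)
  have hexp_i : ‖vi - ni‖ ^ 2 = ‖vi - mi‖ ^ 2 + 2 * (η * ⟪u, mi - ni⟫) + ‖ni - mi‖ ^ 2 := by
    rw [← sub_add_sub_cancel vi mi ni, norm_add_sq_real, hi, real_inner_smul_left,
      norm_sub_rev mi ni]
  have hexp_j : ‖vj - nj‖ ^ 2 = ‖vj - mj‖ ^ 2 - 2 * (η * ⟪u, mj - nj⟫) + ‖nj - mj‖ ^ 2 := by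
    rw [← sub_add_sub_cancel vj mj nj, norm_add_sq_real, hj, inner_neg_left,
      real_inner_smul_left, norm_sub_rev mj nj]
    ring
  have hlin : ⟪u, mi - ni⟫ - ⟪u, mj - nj⟫ + ⟪u, ni - nj⟫ = ⟪u, mi - mj⟫ := by
    simp only [inner_sub_right]
    ring
  rw [hexp_i, hexp_j, ← hm]
  nlinarith [mul_le_mul_of_nonneg_left hsub hη]

/-- for 0 < η ≤ ‖v_i − v_j‖/2 and v_i ≠ v_j, the unique minimizer is
μ_i = (1−α)v_i + αv_j, μ_j = αv_i + (1−α)v_j with α = η/‖v_i − v_j‖. -/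
theorem prox_unique_minimizer_noncollapse {B : ℕ} (η : ℝ) (hη : 0 < η)
    (vi vj : EuclideanSpace ℝ (Fin B)) (hne : vi ≠ vj)
    (hsmall : η ≤ ‖vi - vj‖ / 2) :
    let α : ℝ := η / ‖vi - vj‖
    let mi := (1 - α) • vi + α • vj
    let mj := α • vi + (1 - α) • vj
    ∀ ni nj : EuclideanSpace ℝ (Fin B), (ni, nj) ≠ (mi, mj) →
      proxObj η vi vj mi mj < proxObj η vi vj ni nj := by
  intro α mi mj ni nj hn
  set r := ‖vi - vj‖
  have hr : 0 < r := norm_pos_iff.mpr (sub_ne_zero.mpr hne)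
  obtain ⟨u, hu, hd⟩ : ∃ u, ‖u‖ = 1 ∧ vi - vj = r • u :=
    ⟨r⁻¹ • (vi - vj), norm_smul_inv_norm (sub_ne_zero.mpr hne), (smul_inv_smul₀ hr.ne' _).symm⟩
  have hαr : α * r = η := div_mul_cancel₀ η hr.ne'
  have hi : vi - mi = η • u := by
    rw [← hαr, mul_smul, ← hd]; module
  have hj : vj - mj = -(η • u) := by
    rw [← hαr, mul_smul, ← hd]; module
  have hm : mi - mj = (r - 2 * η) • u := by
    rw [← hαr, sub_smul, mul_smul, mul_smul, ← hd]; module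
  have hm_inner : ⟪u, mi - mj⟫ = ‖mi - mj‖ := by
    rw [hm, real_inner_smul_right, real_inner_self_eq_norm_sq, norm_smul, hu,
      Real.norm_of_nonneg (by linarith : 0 ≤ r - 2 * η)]
    ring
  have hgap := half_sq_norm_sub_add_pos hn
  have := fused_objective_add_half_sq_le hη.le hu.le hi hj hm_inner ni nj
  unfold proxObj
  linarith
end

section
/- Fix η > 0 and vectors v_i, v_j ∈ ℝ^B with η > ‖v_i − v_j‖₂/2. Then the unique minimizer (μ_i, μ_j) of P(μ_i, μ_j) = η‖μ_i − μ_j‖₂ + (1/2)‖v_i − μ_i‖₂² + (1/2)‖v_j − μ_j‖₂² over ℝ^B × ℝ^B satisfies μ_i = μ_j = (v_i + v_j)/2. -/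
open scoped RealInnerProductSpace

section InnerProductSpace

variable {E : Type*} [NormedAddCommGroup E] [InnerProductSpace ℝ E]

theorem norm_sub_sq_add_norm_add_sq_real (u x y : E) :
    ‖u - x‖ ^ 2 + ‖u + y‖ ^ 2 = 2 * ‖u‖ ^ 2 - 2 * ⟪u, x - y⟫ + ‖x‖ ^ 2 + ‖y‖ ^ 2 := by
  rw [norm_sub_sq_real, norm_add_sq_real, inner_sub_right]
  ring

theorem inner_le_mul_norm_of_norm_le {u : E} {η : ℝ} (hu : ‖u‖ ≤ η) (z : E) :
    ⟪u, z⟫ ≤ η * ‖z‖ :=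
  (real_inner_le_norm u z).trans (mul_le_mul_of_nonneg_right hu (norm_nonneg z))

end InnerProductSpace

theorem proxObj_midpoint_add {B : ℕ} (η : ℝ) (vi vj x y : EuclideanSpace ℝ (Fin B)) :
    let m := (1 / 2 : ℝ) • (vi + vj)
    let u := (1 / 2 : ℝ) • (vi - vj)
    proxObj η vi vj (m + x) (m + y) =
      proxObj η vi vj m m + (η * ‖x - y‖ - ⟪u, x - y⟫) + (1 / 2) * (‖x‖ ^ 2 + ‖y‖ ^ 2) := by
  intro m u
  have hi : vi - m = u := by simp only [m, u]; module
  have hj : vj - m = -u := by simp only [m, u]; module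
  have hsq := norm_sub_sq_add_norm_add_sq_real u x y
  simp only [proxObj, sub_self, norm_zero]
  rw [add_sub_add_left_eq_sub, sub_add_eq_sub_sub, sub_add_eq_sub_sub, hi, hj, ← neg_add',
    norm_neg, norm_neg]
  linear_combination (1 / 2 : ℝ) * hsq

theorem prox_unique_minimizer_collapse_general {B : ℕ} (η : ℝ)
    (vi vj : EuclideanSpace ℝ (Fin B)) (hbig : ‖vi - vj‖ / 2 < η) :
    let m := (1 / 2 : ℝ) • (vi + vj)
    ∀ ni nj : EuclideanSpace ℝ (Fin B), (ni, nj) ≠ (m, m) →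
      proxObj η vi vj m m < proxObj η vi vj ni nj := by
  intro m ni nj hne
  obtain ⟨x, rfl⟩ : ∃ x, ni = m + x := ⟨ni - m, by abel⟩
  obtain ⟨y, rfl⟩ : ∃ y, nj = m + y := ⟨nj - m, by abel⟩
  have hu : ‖(1 / 2 : ℝ) • (vi - vj)‖ ≤ η := by
    rw [norm_smul, Real.norm_of_nonneg (by norm_num)]
    linarith
  have hgap := inner_le_mul_norm_of_norm_le hu (x - y)
  have hxy : 0 < ‖x‖ ^ 2 + ‖y‖ ^ 2 := by
    have hxy0 : x ≠ 0 ∨ y ≠ 0 := by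
      by_contra! h
      simp [h.1, h.2] at hne
    rcases hxy0 with hx | hy <;> positivity
  rw [proxObj_midpoint_add]
  linarith

/-- for η > ‖v_i − v_j‖/2, the unique minimizer collapses:
μ_i = μ_j = (v_i + v_j)/2. -/
theorem prox_unique_minimizer_collapse {B : ℕ} (η : ℝ) (hη : 0 < η)
    (vi vj : EuclideanSpace ℝ (Fin B)) (hbig : ‖vi - vj‖ / 2 < η) :
    let m := (1 / 2 : ℝ) • (vi + vj)
    ∀ ni nj : EuclideanSpace ℝ (Fin B), (ni, nj) ≠ (m, m) →
      proxObj η vi vj m m < proxObj η vi vj ni nj :=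
  prox_unique_minimizer_collapse_general η vi vj hbig
end

section
/- Let w_1,…,w_M be elements of Hilbert spaces H_1,…,H_M (not all zero) and p > 1. The minimizer over θ ∈ ℝ^M with θ ⪰ 0 and ‖θ‖_p ≤ 1 of the function θ ↦ ∑_{m=1}^M ‖w_m‖²_{H_m}/θ_m (with the convention t/0 = +∞ for t > 0 and 0/0 = 0) is attained at θ_m = ‖w_m‖^{2/(p+1)} / (∑_{m'} ‖w_{m'}‖^{2p/(p+1)})^{1/p}. -/
open Real Classical ENNReal

/-- The MKL objective θ ↦ ∑_m ‖w_m‖²/θ_m, valued in ℝ≥0∞, with the conventions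
t/0 = +∞ for t > 0 and 0/0 = 0. -/
noncomputable def mklObj (M : ℕ) (a : Fin M → ℝ) (θ : Fin M → ℝ) : ℝ≥0∞ :=
  ∑ m : Fin M, if a m = 0 then 0
    else if θ m = 0 then ⊤ else ENNReal.ofReal ((a m) ^ 2 / θ m)

/-!
The weights `θ*` satisfy `∑ θ*ᵢ ^ p = 1`, and `∑ aᵢ² / θ*ᵢ = S ^ ((p + 1) / p)` with
`S = ∑ aᵢ ^ (2p / (p + 1))`. Conversely, Hölder's inequality for the exponents `1`, `p` and
`r = p / (p + 1)`, applied to `aᵢ² / θᵢ` and `θᵢ`, gives `S ≤ (∑ aᵢ² / θᵢ) ^ r (∑ θᵢ ^ p) ^ (r / p)`,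
so `S ^ ((p + 1) / p)` is a lower bound on the objective over the unit ball of `ℓ^p`.
-/

open Finset

section OptimalWeights

variable {ι : Type*} [Fintype ι] {a θ : ι → ℝ} {p : ℝ}

theorem sum_rpow_rpow_le_sum_sq_div_mul_Lp (hp : 0 < p) (ha : ∀ i, 0 ≤ a i)
    (hθ : ∀ i, 0 ≤ θ i) (hsupp : ∀ i, a i ≠ 0 → θ i ≠ 0) :
    (∑ i, a i ^ (2 * p / (p + 1))) ^ ((p + 1) / p) ≤
      (∑ i, a i ^ 2 / θ i) * (∑ i, θ i ^ p) ^ (1 / p) := by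
  set r := p / (p + 1) with hr
  have hr0 : 0 < r := by positivity
  have htriple : Real.HolderTriple 1 p r :=
    ⟨by rw [hr]; field_simp, one_pos, hp⟩
  have hprod : ∀ i, (a i ^ 2 / θ i * θ i) ^ r = a i ^ (2 * p / (p + 1)) := by
    intro i
    by_cases hai : a i = 0
    · simp [hai, Real.zero_rpow hr0.ne', Real.zero_rpow (by positivity : 2 * p / (p + 1) ≠ 0)]
    rw [div_mul_cancel₀ _ (hsupp i hai), ← Real.rpow_natCast, ← Real.rpow_mul (ha i)]
    congr 1
    push_cast
    ring
  have holder := Real.Lr_rpow_le_Lp_mul_Lq_of_nonneg univ htriple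
    (fun i _ => div_nonneg (sq_nonneg (a i)) (hθ i)) (fun i _ => hθ i)
  simp only [hprod, Real.rpow_one, div_one] at holder
  have hT : 0 ≤ ∑ i, a i ^ 2 / θ i := sum_nonneg fun i _ => div_nonneg (sq_nonneg _) (hθ i)
  have hΘ : 0 ≤ ∑ i, θ i ^ p := sum_nonneg fun i _ => Real.rpow_nonneg (hθ i) _
  calc (∑ i, a i ^ (2 * p / (p + 1))) ^ ((p + 1) / p)
      ≤ ((∑ i, a i ^ 2 / θ i) ^ r * (∑ i, θ i ^ p) ^ (r / p)) ^ ((p + 1) / p) :=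
        Real.rpow_le_rpow (sum_nonneg fun i _ => Real.rpow_nonneg (ha i) _) holder (by positivity)
    _ = (∑ i, a i ^ 2 / θ i) * (∑ i, θ i ^ p) ^ (1 / p) := by
        have hexpT : r * ((p + 1) / p) = 1 := by rw [hr]; field_simp
        have hexpΘ : r / p * ((p + 1) / p) = 1 / p := by rw [hr]; field_simp
        rw [Real.mul_rpow (by positivity) (by positivity), ← Real.rpow_mul hT,
          ← Real.rpow_mul hΘ, hexpT, hexpΘ, Real.rpow_one]

variable (a p) in
noncomputable def mklOptWeights : ι → ℝ :=
  fun i => a i ^ (2 / (p + 1)) / (∑ j, a j ^ (2 * p / (p + 1))) ^ (1 / p)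

theorem mklOptWeights_nonneg (ha : ∀ i, 0 ≤ a i) (i : ι) : 0 ≤ mklOptWeights a p i :=
  div_nonneg (Real.rpow_nonneg (ha i) _)
    (Real.rpow_nonneg (sum_nonneg fun j _ => Real.rpow_nonneg (ha j) _) _)

theorem sum_rpow_pos_of_ne_zero (ha : ∀ i, 0 ≤ a i) {i : ι} (hi : a i ≠ 0) (s : ℝ) :
    0 < ∑ j, a j ^ s :=
  sum_pos' (fun j _ => Real.rpow_nonneg (ha j) _)
    ⟨i, mem_univ i, Real.rpow_pos_of_pos ((ha i).lt_of_ne' hi) _⟩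

theorem mklOptWeights_ne_zero (ha : ∀ i, 0 ≤ a i) {i : ι} (hi : a i ≠ 0) :
    mklOptWeights a p i ≠ 0 :=
  (div_pos (Real.rpow_pos_of_pos ((ha i).lt_of_ne' hi) _)
    (Real.rpow_pos_of_pos (sum_rpow_pos_of_ne_zero ha hi _) _)).ne'

theorem sum_mklOptWeights_rpow (hp : 0 < p) (ha : ∀ i, 0 ≤ a i) (ha_ne : ∃ i, a i ≠ 0) :
    ∑ i, mklOptWeights a p i ^ p = 1 := by
  obtain ⟨i₀, hi₀⟩ := ha_ne
  set S := ∑ j, a j ^ (2 * p / (p + 1))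
  have hS : 0 < S := sum_rpow_pos_of_ne_zero ha hi₀ _
  have hterm : ∀ i, mklOptWeights a p i ^ p = a i ^ (2 * p / (p + 1)) / S := by
    intro i
    rw [mklOptWeights, Real.div_rpow (Real.rpow_nonneg (ha i) _) (Real.rpow_nonneg hS.le _),
      ← Real.rpow_mul (ha i), ← Real.rpow_mul hS.le, one_div_mul_cancel hp.ne', Real.rpow_one]
    congr 2
    ring
  rw [sum_congr rfl fun i _ => hterm i, ← sum_div, div_self hS.ne']

theorem sum_sq_div_mklOptWeights (hp : 0 < p) (ha : ∀ i, 0 ≤ a i) :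
    ∑ i, a i ^ 2 / mklOptWeights a p i = (∑ i, a i ^ (2 * p / (p + 1))) ^ ((p + 1) / p) := by
  set S := ∑ j, a j ^ (2 * p / (p + 1))
  have hterm : ∀ i, a i ^ 2 / mklOptWeights a p i = a i ^ (2 * p / (p + 1)) * S ^ (1 / p) := by
    intro i
    by_cases hai : a i = 0
    · simp [hai, Real.zero_rpow (by positivity : 2 * p / (p + 1) ≠ 0)]
    rw [mklOptWeights, div_div_eq_mul_div, mul_div_right_comm, ← Real.rpow_natCast,
      ← Real.rpow_sub ((ha i).lt_of_ne' hai)]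
    congr 2
    push_cast
    field_simp
    ring
  rw [sum_congr rfl fun i _ => hterm i, ← sum_mul,
    ← Real.rpow_one_add' (sum_nonneg fun i _ => Real.rpow_nonneg (ha i) _) (by positivity)]
  congr 1
  field_simp

end OptimalWeights

theorem mklObj_eq_top {M : ℕ} {a θ : Fin M → ℝ} (h : ∃ m, a m ≠ 0 ∧ θ m = 0) :
    mklObj M a θ = ⊤ := by
  obtain ⟨m, ham, hθm⟩ := h
  exact ENNReal.sum_eq_top.mpr ⟨m, mem_univ m, by simp [ham, hθm]⟩

theorem mklObj_eq_ofReal {M : ℕ} {a θ : Fin M → ℝ} (hθ : ∀ m, 0 ≤ θ m)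
    (hsupp : ∀ m, a m ≠ 0 → θ m ≠ 0) :
    mklObj M a θ = ENNReal.ofReal (∑ m, a m ^ 2 / θ m) := by
  rw [mklObj, ENNReal.ofReal_sum_of_nonneg fun m _ => div_nonneg (sq_nonneg _) (hθ m)]
  refine sum_congr rfl fun m _ => ?_
  by_cases ham : a m = 0
  · simp [ham]
  · rw [if_neg ham, if_neg (hsupp m ham)]

theorem mkl_weight_update_general (M : ℕ)
    (H : Fin M → Type*) [∀ m, NormedAddCommGroup (H m)]
    (w : ∀ m, H m) (hw : ∃ m, w m ≠ 0) (p : ℝ) (hp : 1 < p) :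
    let θstar : Fin M → ℝ := fun m =>
      ‖w m‖ ^ (2 / (p + 1)) / (∑ m' : Fin M, ‖w m'‖ ^ (2 * p / (p + 1))) ^ (1 / p)
    ((∀ m, 0 ≤ θstar m) ∧ (∑ m : Fin M, (θstar m) ^ p) ^ (1 / p) ≤ 1) ∧
    ∀ θ : Fin M → ℝ, (∀ m, 0 ≤ θ m) → (∑ m : Fin M, (θ m) ^ p) ^ (1 / p) ≤ 1 →
      mklObj M (fun m => ‖w m‖) θstar ≤ mklObj M (fun m => ‖w m‖) θ := by
  intro θstar
  set a : Fin M → ℝ := fun m => ‖w m‖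
  have hθstar : θstar = mklOptWeights a p := rfl
  have ha : ∀ m, 0 ≤ a m := fun m => norm_nonneg _
  have hp0 : 0 < p := by linarith
  rw [hθstar]
  refine ⟨⟨mklOptWeights_nonneg ha, ?_⟩, fun θ hθ hθ_le => ?_⟩
  · rw [sum_mklOptWeights_rpow hp0 ha (hw.imp fun m => norm_ne_zero_iff.mpr), Real.one_rpow]
  by_cases hz : ∃ m, a m ≠ 0 ∧ θ m = 0
  · rw [mklObj_eq_top hz]
    exact le_top
  push Not at hz
  rw [mklObj_eq_ofReal (mklOptWeights_nonneg ha) fun m => mklOptWeights_ne_zero ha,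
    mklObj_eq_ofReal hθ hz, sum_sq_div_mklOptWeights hp0 ha]
  refine ENNReal.ofReal_le_ofReal ((sum_rpow_rpow_le_sum_sq_div_mul_Lp hp0 ha hθ hz).trans ?_)
  exact mul_le_of_le_one_right (sum_nonneg fun m _ => div_nonneg (sq_nonneg _) (hθ m)) hθ_le

/-- the closed-form MKL weight update. For Hilbert space elements
w_1,…,w_M (not all zero) and p > 1, the minimizer over {θ ⪰ 0, ‖θ‖_p ≤ 1} of
∑_m ‖w_m‖²/θ_m is attained at θ_m = ‖w_m‖^{2/(p+1)} / (∑_{m'} ‖w_{m'}‖^{2p/(p+1)})^{1/p}. -/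
theorem mkl_weight_update (M : ℕ) (hM : 0 < M)
    (H : Fin M → Type*) [∀ m, NormedAddCommGroup (H m)] [∀ m, InnerProductSpace ℝ (H m)]
    [∀ m, CompleteSpace (H m)]
    (w : ∀ m, H m) (hw : ∃ m, w m ≠ 0) (p : ℝ) (hp : 1 < p) :
    let θstar : Fin M → ℝ := fun m =>
      ‖w m‖ ^ (2 / (p + 1)) / (∑ m' : Fin M, ‖w m'‖ ^ (2 * p / (p + 1))) ^ (1 / p)
    ((∀ m, 0 ≤ θstar m) ∧ (∑ m : Fin M, (θstar m) ^ p) ^ (1 / p) ≤ 1) ∧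
    ∀ θ : Fin M → ℝ, (∀ m, 0 ≤ θ m) → (∑ m : Fin M, (θ m) ^ p) ^ (1 / p) ≤ 1 →
      mklObj M (fun m => ‖w m‖) θstar ≤ mklObj M (fun m => ‖w m‖) θ :=
  mkl_weight_update_general M H w hw p hp
end
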